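/- arXiv:2601.11153 — 5 statements merged into one kernel-verified Lean document; each statement's English description precedes it below -/
import Mathlib

section
/- If a finite simple directed graph contains a directed cycle, then it contains a simple directed cycle C such that no arc of the graph is a shortcut arc for C (i.e., no arc a not on C has the property that C together with a contains a simple directed cycle different from C). -/
/-- A directed cycle in a digraph with arc relation `A`, represented as a map
`c : ZMod n → V` (with `n > 0`) such that consecutive vertices are joined by arcs. -/
def IsDicycle {V : Type*} (A : V → V → Prop) {n : ℕ} (c : ZMod n → V) : Prop :=
  0 < n ∧ ∀ i : ZMod n, A (c i) (c (i + 1))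

/-- The set of arcs traversed by a cycle. -/
def cycleArcs {V : Type*} {n : ℕ} (c : ZMod n → V) : Set (V × V) :=
  {p | ∃ i : ZMod n, p = (c i, c (i + 1))}

/-- An arc `(u, v)` of the digraph that is not traversed by the simple directed cycle `c`
is a shortcut arc for `c` if the arcs of `c` together with `(u, v)` contain a simple
directed cycle different from `c`. -/
def IsShortcutArc {V : Type*} (A : V → V → Prop) {n : ℕ} (c : ZMod n → V)
    (u v : V) : Prop :=
  A u v ∧ (u, v) ∉ cycleArcs c ∧
    ∃ (m : ℕ) (c' : ZMod m → V), IsDicycle A c' ∧ Function.Injective c' ∧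
      cycleArcs c' ⊆ cycleArcs c ∪ {(u, v)} ∧ cycleArcs c' ≠ cycleArcs c

private lemma cycleArcs_eq_range {V : Type*} {n : ℕ} (c : ZMod n → V) :
    cycleArcs c = Set.range (fun i : ZMod n => (c i, c (i + 1))) := by
  ext p
  exact exists_congr fun i => eq_comm

private lemma ncard_range_eq {V : Type*} {n : ℕ} (c : ZMod n → V)
    (h : Function.Injective c) : (Set.range c).ncard = n := by
  rw [← Set.image_univ, Set.ncard_image_of_injective _ h, Set.ncard_univ, Nat.card_zmod]

private lemma ncard_cycleArcs {V : Type*} {n : ℕ} (c : ZMod n → V)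
    (h : Function.Injective c) : (cycleArcs c).ncard = n := by
  rw [cycleArcs_eq_range]
  exact ncard_range_eq _ (fun a b hab => h (congrArg Prod.fst hab))

private lemma min_cycle_injective {V : Type*} (A : V → V → Prop) {m : ℕ}
    (c : ZMod m → V) (hc : IsDicycle A c)
    (hmin : ∀ k, k < m → ¬ ∃ c : ZMod k → V, IsDicycle A c) :
    Function.Injective c := by
  have hm : 0 < m := hc.1
  haveI : NeZero m := ⟨hm.ne'⟩
  by_contra h
  simp only [Function.Injective, not_forall] at h
  obtain ⟨i, j, hij, hne⟩ := h
  set d := (j - i).val with hd_def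
  have hd0 : 0 < d := by
    rw [hd_def, ZMod.val_pos]
    exact sub_ne_zero_of_ne (Ne.symm hne)
  have hdm : d < m := ZMod.val_lt _
  haveI : NeZero d := ⟨hd0.ne'⟩
  apply hmin d hdm
  refine ⟨fun t => c (i + (t.val : ZMod m)), hd0, fun t => ?_⟩
  have hcd : ((d : ZMod m)) = j - i := by rw [hd_def, ZMod.natCast_val, ZMod.cast_id]
  by_cases ht : t.val + 1 = d
  · -- wrap-around step
    have h1 : (t + 1 : ZMod d) = 0 := by
      have h0 : ((t.val : ZMod d)) = t := by rw [ZMod.natCast_val, ZMod.cast_id]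
      rw [← h0, ← Nat.cast_one, ← Nat.cast_add, ht, ZMod.natCast_self]
    have h2 := hc.2 (i + (t.val : ZMod m))
    have h3 : i + (t.val : ZMod m) + 1 = j := by
      rw [add_assoc, ← Nat.cast_one (R := ZMod m), ← Nat.cast_add, ht, hcd]
      ring
    simp only [h1, ZMod.val_zero, Nat.cast_zero, add_zero]
    rw [h3] at h2
    rwa [← hij] at h2
  · have htlt : t.val + 1 < d := lt_of_le_of_ne (Nat.succ_le_of_lt t.val_lt) ht
    have h1d : 1 < d := lt_of_le_of_lt (Nat.le_add_left 1 t.val) htlt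
    haveI : Fact (1 < d) := ⟨h1d⟩
    have h1 : (t + 1 : ZMod d).val = t.val + 1 := by
      rw [ZMod.val_add_of_lt] <;> rw [ZMod.val_one]
      exact htlt
    have h2 := hc.2 (i + (t.val : ZMod m))
    simp only [h1]
    rwa [add_assoc, ← Nat.cast_one (R := ZMod m), ← Nat.cast_add] at h2

private lemma no_shortcut_of_min {V : Type*} [Fintype V] (A : V → V → Prop)
    (hirr : Irreflexive A) {m : ℕ} (c : ZMod m → V) (hc : IsDicycle A c)
    (hmin : ∀ k, k < m → ¬ ∃ c : ZMod k → V, IsDicycle A c)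
    (hinj : Function.Injective c) (u v : V) : ¬ IsShortcutArc A c u v := by
  classical
  intro hs
  have hm : 0 < m := hc.1
  haveI : NeZero m := ⟨hm.ne'⟩
  obtain ⟨hA, huv, m', c', hdic', hinj', hsub, hne⟩ := hs
  have hm' : 0 < m' := hdic'.1
  haveI : NeZero m' := ⟨hm'.ne'⟩
  have huvne : u ≠ v := fun h => hirr u (h ▸ hA)
  -- vertices of c' are vertices of c
  have hWW : Set.range c' ⊆ Set.range c := by
    rintro x ⟨i, rfl⟩
    have h1 : (c' i, c' (i + 1)) ∈ cycleArcs c' := ⟨i, rfl⟩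
    have h2 : (c' (i - 1), c' (i - 1 + 1)) ∈ cycleArcs c' := ⟨i - 1, rfl⟩
    rw [sub_add_cancel] at h2
    rcases hsub h1 with h | h
    · obtain ⟨j, hj⟩ := h
      exact ⟨j, (congrArg Prod.fst hj).symm⟩
    · -- c' i = u
      rw [Set.mem_singleton_iff, Prod.mk.injEq] at h
      rcases hsub h2 with h' | h'
      · obtain ⟨j, hj⟩ := h'
        exact ⟨j + 1, (congrArg Prod.snd hj).symm⟩
      · rw [Set.mem_singleton_iff, Prod.mk.injEq] at h'
        exact absurd (h.1.symm.trans h'.2) huvne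
  -- length comparison
  have hmm' : m ≤ m' := by
    by_contra h
    exact hmin m' (lt_of_not_ge h) ⟨c', hdic'⟩
  have hcard' : (Set.range c').ncard = m' := ncard_range_eq _ hinj'
  have hcard : (Set.range c).ncard = m := ncard_range_eq _ hinj
  have hm'm : m' ≤ m := by
    rw [← hcard, ← hcard']
    exact Set.ncard_le_ncard hWW (Set.toFinite _)
  have hmeq : m' = m := le_antisymm hm'm hmm'
  have hWeq : Set.range c' = Set.range c :=
    Set.eq_of_subset_of_ncard_le hWW (by rw [hcard, hcard', hmeq]) (Set.toFinite _)
  by_cases huv' : (u, v) ∈ cycleArcs c'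
  · -- c' traverses (u,v); derive contradiction
    obtain ⟨k', hk'⟩ := huv'
    have hu : c' k' = u := (congrArg Prod.fst hk').symm
    have hv' : c' (k' + 1) = v := (congrArg Prod.snd hk').symm
    have : u ∈ Set.range c := hWW ⟨k', hu⟩
    obtain ⟨k, hk⟩ := this
    have hvne : v ≠ c (k + 1) := by
      intro h
      exact huv ⟨k, by rw [hk, h]⟩
    have : c (k + 1) ∈ Set.range c' := by rw [hWeq]; exact ⟨k + 1, rfl⟩
    obtain ⟨t, ht⟩ := this
    have harc : (c' (t - 1), c' (t - 1 + 1)) ∈ cycleArcs c' := ⟨t - 1, rfl⟩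
    rw [sub_add_cancel] at harc
    rcases hsub harc with h | h
    · obtain ⟨j, hj⟩ := h
      have hj2 : c' t = c (j + 1) := congrArg Prod.snd hj
      have hjk : j = k := by
        have := hinj (hj2.symm.trans ht)
        exact add_right_cancel this
      have hj1 : c' (t - 1) = c j := congrArg Prod.fst hj
      have heq : c' (t - 1) = c' k' := by rw [hj1, hjk, hk, hu]
      have htk : t - 1 = k' := hinj' heq
      have hvt : c' t = v := by
        have h5 : t = k' + 1 := by rw [← htk]; ring
        rw [h5, hv']
      exact hvne (hvt.symm.trans ht)
    · rw [Set.mem_singleton_iff, Prod.mk.injEq] at h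
      exact hvne (h.2.symm.trans ht)
  · -- c' uses only arcs of c, so cycleArcs c' = cycleArcs c, contradiction
    have hsub' : cycleArcs c' ⊆ cycleArcs c := by
      intro p hp
      rcases hsub hp with h | h
      · exact h
      · rw [Set.mem_singleton_iff] at h
        exact absurd (h ▸ hp) huv'
    have hS' : (cycleArcs c').ncard = m' := ncard_cycleArcs _ hinj'
    have hS : (cycleArcs c).ncard = m := ncard_cycleArcs _ hinj
    exact hne (Set.eq_of_subset_of_ncard_le hsub' (by rw [hS, hS', hmeq]) (Set.toFinite _))

/-- If a finite simple directed graph contains a directed cycle, then it contains a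
simple directed cycle for which there is no shortcut arc. -/
theorem exists_simple_dicycle_without_shortcut {V : Type*} [Fintype V]
    (A : V → V → Prop) (hirr : Irreflexive A)
    (hcyc : ∃ (n : ℕ) (c : ZMod n → V), IsDicycle A c) :
    ∃ (m : ℕ) (c : ZMod m → V), IsDicycle A c ∧ Function.Injective c ∧
      ∀ u v : V, ¬ IsShortcutArc A c u v := by
  classical
  obtain ⟨c, hc⟩ := Nat.find_spec hcyc
  have hmin : ∀ k, k < Nat.find hcyc → ¬ ∃ c : ZMod k → V, IsDicycle A c :=
    fun k hk => Nat.find_min hcyc hk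
  have hinj := min_cycle_injective A c hc hmin
  exact ⟨Nat.find hcyc, c, hc, hinj, fun u v => no_shortcut_of_min A hirr c hc hmin hinj u v⟩
end

section
/- Let M be a matroid, let C, C1, ..., Cℓ be circuits of M, and let u1, ..., uℓ, v be distinct elements such that: (1) ui ∈ C ∩ Ci for every i ∈ [ℓ]; (2) ui ∉ Cj for all distinct i, j ∈ [ℓ]; (3) v ∈ C \ (C1 ∪ ... ∪ Cℓ). Then there exists a circuit C' of M with C' ⊆ (C ∪ C1 ∪ ... ∪ Cℓ) \ {u1, ..., uℓ}. -/
/-- A circuit of a matroid is an inclusion-wise minimal dependent set. -/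
def Matroid.IsCircuit' {α : Type*} (M : Matroid α) (C : Set α) : Prop :=
  M.Dep C ∧ ∀ ⦃D : Set α⦄, D ⊂ C → M.Indep D

/-!
Put `X := (C ∪ ⋃ i, Cᵢ) \ {u₁, …, u_ℓ}`. Since `uᵢ` is the only element of `Cᵢ` among the `uⱼ` and
`v ∉ Cᵢ`, the circuit `Cᵢ` gives `uᵢ ∈ cl(Cᵢ \ {uᵢ}) ⊆ cl(X \ {v})`. Hence `C \ {v} ⊆ cl(X \ {v})`,
and the circuit `C` puts `v` in `cl(X \ {v})` as well. As `v ∈ X`, the set `X` is dependent and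
so contains a circuit.
-/

open Set

namespace Matroid

variable {α : Type*} {M : Matroid α} {C X : Set α} {v : α}

lemma isCircuit'_iff_isCircuit : M.IsCircuit' C ↔ M.IsCircuit C := by
  rw [IsCircuit', isCircuit_iff_forall_ssubset]

lemma IsCircuit.dep_of_sdiff_singleton_subset_closure (hC : M.IsCircuit C) (hvC : v ∈ C)
    (hvX : v ∈ X) (hXE : X ⊆ M.E) (hCX : C \ {v} ⊆ M.closure (X \ {v})) : M.Dep X := by
  refine (not_indep_iff hXE).1 fun hX ↦ hX.notMem_closure_sdiff_of_mem hvX ?_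
  exact M.closure_subset_closure_of_subset_closure hCX (hC.mem_closure_sdiff_singleton_of_mem hvC)

end Matroid

open Matroid

theorem circuit_union_general {α : Type*} (M : Matroid α) (ℓ : ℕ) (C : Set α)
    (Ci : Fin ℓ → Set α) (u : Fin ℓ → α) (v : α)
    (hC : M.IsCircuit' C) (hCi : ∀ i, M.IsCircuit' (Ci i))
    (hv_u : v ∉ Set.range u)
    (hU1 : ∀ i, u i ∈ C ∩ Ci i)
    (hU2 : ∀ i j, i ≠ j → u i ∉ Ci j)
    (hU3 : v ∈ C \ ⋃ i, Ci i) :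
    ∃ C' : Set α, M.IsCircuit' C' ∧ C' ⊆ (C ∪ ⋃ i, Ci i) \ Set.range u := by
  simp_rw [isCircuit'_iff_isCircuit] at hC hCi ⊢
  set X := (C ∪ ⋃ i, Ci i) \ range u
  have hXE : X ⊆ M.E := sdiff_subset.trans <|
    union_subset hC.subset_ground (iUnion_subset fun i ↦ (hCi i).subset_ground)
  have hCiX (i : Fin ℓ) : Ci i \ {u i} ⊆ X \ {v} := by
    rintro x ⟨hxi, hxu⟩
    refine ⟨⟨.inr (mem_iUnion_of_mem i hxi), ?_⟩, ?_⟩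
    · rintro ⟨j, rfl⟩
      exact hU2 j i (fun hji ↦ hxu (congrArg u hji)) hxi
    · rintro rfl
      exact hU3.2 (mem_iUnion_of_mem i hxi)
  have hCX : C \ {v} ⊆ M.closure (X \ {v}) := by
    rintro x ⟨hxC, hxv⟩
    by_cases hxu : x ∈ range u
    · obtain ⟨i, rfl⟩ := hxu
      exact M.closure_subset_closure (hCiX i)
        ((hCi i).mem_closure_sdiff_singleton_of_mem (hU1 i).2)
    · exact M.subset_closure _ (sdiff_subset.trans hXE) ⟨⟨.inl hxC, hxu⟩, hxv⟩
  have hvX : v ∈ X := ⟨.inl hU3.1, hv_u⟩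
  obtain ⟨C', hC'X, hC'⟩ :=
    (hC.dep_of_sdiff_singleton_subset_closure hU3.1 hvX hXE hCX).exists_isCircuit_subset
  exact ⟨C', hC', hC'X⟩

/-- Lemma 2.4 of Kamiyama (circuit union): given circuits `C, C₁, …, C_ℓ` and
distinct elements `u₁, …, u_ℓ, v` with `uᵢ ∈ C ∩ Cᵢ`, `uᵢ ∉ Cⱼ` for `i ≠ j`, and
`v ∈ C \ (C₁ ∪ ⋯ ∪ C_ℓ)`, there is a circuit inside
`(C ∪ C₁ ∪ ⋯ ∪ C_ℓ) \ {u₁, …, u_ℓ}`. -/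
theorem circuit_union {α : Type*} (M : Matroid α) (ℓ : ℕ) (C : Set α)
    (Ci : Fin ℓ → Set α) (u : Fin ℓ → α) (v : α)
    (hC : M.IsCircuit' C) (hCi : ∀ i, M.IsCircuit' (Ci i))
    (hu_inj : Function.Injective u) (hv_u : v ∉ Set.range u)
    (hU1 : ∀ i, u i ∈ C ∩ Ci i)
    (hU2 : ∀ i j, i ≠ j → u i ∉ Ci j)
    (hU3 : v ∈ C \ ⋃ i, Ci i) :
    ∃ C' : Set α, M.IsCircuit' C' ∧ C' ⊆ (C ∪ ⋃ i, Ci i) \ Set.range u :=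
  circuit_union_general M ℓ C Ci u v hC hCi hv_u hU1 hU2 hU3
end

section
/- Let M be a matroid, let I be an independent set, and let u1, ..., uℓ ∈ cl(I) \ I and v1, ..., vℓ ∈ I be distinct elements such that vi belongs to the fundamental circuit C(ui, I) for each i ∈ [ℓ], and vi ∉ C(uj, I) whenever i < j. Then J := (I ∪ {u1,...,uℓ}) \ {v1,...,vℓ} is independent and cl(I) = cl(J). -/
open Set

lemma Set.union_sdiff_singleton_sdiff {α : Type*} {X U V : Set α} {b : α} (hb : b ∉ U) :
    (X \ {b} ∪ U) \ V = (X ∪ U) \ insert b V := by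
  ext y
  by_cases hy : y = b
  · subst hy; simp [hb]
  · simp [hy]

namespace Matroid

variable {α : Type*} {M : Matroid α} {I C : Set α} {e x : α}

lemma IsCircuit'.isCircuit (hC : M.IsCircuit' C) : M.IsCircuit C :=
  isCircuit_iff_forall_ssubset.2 hC

lemma IsCircuit.notMem_of_subset_insert (hC : M.IsCircuit C) (hI : M.Indep I)
    (hCI : C ⊆ insert e I) : e ∉ I := fun heI ↦
  hC.not_indep (hI.subset (by rwa [insert_eq_of_mem heI] at hCI))

lemma IsCircuit.mem_of_subset_insert (hC : M.IsCircuit C) (hI : M.Indep I)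
    (hCI : C ⊆ insert e I) : e ∈ C := by_contra fun heC ↦
  hC.not_indep (hI.subset ((subset_insert_iff_of_notMem heC).1 hCI))

lemma IsCircuit.mem_closure_of_subset_insert (hC : M.IsCircuit C) (hI : M.Indep I)
    (hCI : C ⊆ insert e I) : e ∈ M.closure I :=
  (mem_closure_iff_exists_isCircuit (hC.notMem_of_subset_insert hI hCI)).2
    ⟨C, hCI, hC, hC.mem_of_subset_insert hI hCI⟩

lemma IsCircuit.indep_insert_sdiff_singleton (hC : M.IsCircuit C) (hI : M.Indep I)
    (hCI : C ⊆ insert e I) (hxC : x ∈ C) : M.Indep (insert e I \ {x}) := by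
  rw [hC.eq_fundCircuit_of_subset hI hCI] at hxC
  exact (hI.mem_fundCircuit_iff (hC.mem_closure_of_subset_insert hI hCI)
    (hC.notMem_of_subset_insert hI hCI)).1 hxC

lemma IsCircuit.closure_insert_sdiff_singleton (hC : M.IsCircuit C) (hI : M.Indep I)
    (hCI : C ⊆ insert e I) (hxC : x ∈ C) : M.closure (insert e I \ {x}) = M.closure I := by
  have hx : x ∈ M.closure (insert e I \ {x}) :=
    M.closure_subset_closure (sdiff_subset_sdiff_left hCI)
      (hC.mem_closure_sdiff_singleton_of_mem hxC)
  rw [closure_sdiff_singleton_eq_closure hx,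
    closure_insert_eq_of_mem_closure (hC.mem_closure_of_subset_insert hI hCI)]

theorem Indep.exchange_sequence (hI : M.Indep I) {ℓ : ℕ} {u v : Fin ℓ → α} {C : Fin ℓ → Set α}
    (hC : ∀ i, M.IsCircuit (C i)) (hCI : ∀ i, C i ⊆ insert (u i) I) (hvC : ∀ i, v i ∈ C i)
    (hvC_lt : ∀ i j, i < j → v i ∉ C j) :
    M.Indep ((I ∪ range u) \ range v) ∧ M.closure ((I ∪ range u) \ range v) = M.closure I := by
  induction ℓ generalizing I with
  | zero => simpa [range_eq_empty] using hI
  | succ n ih =>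
    set I' := insert (u 0) I \ {v 0}
    have hCI' (i : Fin n) : C i.succ ⊆ insert (u i.succ) I' := fun y hy ↦ by
      obtain rfl | hyI := hCI i.succ hy
      · exact mem_insert _ _
      · exact mem_insert_of_mem _
          ⟨mem_insert_of_mem _ hyI, fun hyv ↦ hvC_lt 0 i.succ i.succ_pos (hyv ▸ hy)⟩
    have hv₀ : v 0 ∉ range (Fin.tail u) := by
      rintro ⟨i, hi⟩
      exact hvC_lt 0 i.succ i.succ_pos (hi ▸ (hC i.succ).mem_of_subset_insert hI (hCI i.succ))
    obtain ⟨hJ, hJcl⟩ := ih (I := I') ((hC 0).indep_insert_sdiff_singleton hI (hCI 0) (hvC 0))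
      (fun i ↦ hC i.succ) hCI' (fun i ↦ hvC i.succ)
      (fun i j hij ↦ hvC_lt i.succ j.succ (Fin.succ_lt_succ_iff.2 hij))
    have hJ_eq : (I' ∪ range (Fin.tail u)) \ range (Fin.tail v) = (I ∪ range u) \ range v := by
      rw [union_sdiff_singleton_sdiff hv₀, Fin.range_fin_succ u, Fin.range_fin_succ v,
        insert_union, union_insert]
    rw [← hJ_eq]
    exact ⟨hJ, hJcl.trans ((hC 0).closure_insert_sdiff_singleton hI (hCI 0) (hvC 0))⟩

end Matroid

theorem iri_tomizawa_sequence_general {α : Type*} (M : Matroid α) (I : Set α)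
    (hI : M.Indep I) (ℓ : ℕ) (u v : Fin ℓ → α)
    (C : Fin ℓ → Set α)
    (hC : ∀ i, M.IsCircuit' (C i) ∧ u i ∈ C i ∧ C i ⊆ insert (u i) I)
    (h1 : ∀ i, v i ∈ C i)
    (h2 : ∀ i j : Fin ℓ, i < j → v i ∉ C j) :
    M.Indep ((I ∪ Set.range u) \ Set.range v) ∧
      M.closure I = M.closure ((I ∪ Set.range u) \ Set.range v) := by
  obtain ⟨hJ, hcl⟩ := hI.exchange_sequence (fun i ↦ (hC i).1.isCircuit) (fun i ↦ (hC i).2.2) h1 h2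
  exact ⟨hJ, hcl.symm⟩

/-- Iri–Tomizawa exchange lemma: given distinct elements
`u₁, …, u_ℓ ∈ cl(I) \ I` and `v₁, …, v_ℓ ∈ I` with `vᵢ ∈ C(uᵢ, I)` for all `i`
and `vᵢ ∉ C(uⱼ, I)` for `i < j`, the set
`J = (I ∪ {u₁, …, u_ℓ}) \ {v₁, …, v_ℓ}` is independent and `cl(I) = cl(J)`.
Here `C i` is the fundamental circuit of `uᵢ` and `I`. -/
theorem iri_tomizawa_sequence {α : Type*} (M : Matroid α) (I : Set α)
    (hI : M.Indep I) (ℓ : ℕ) (u v : Fin ℓ → α)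
    (hu : ∀ i, u i ∈ M.closure I \ I) (hv : ∀ i, v i ∈ I)
    (hu_inj : Function.Injective u) (hv_inj : Function.Injective v)
    (C : Fin ℓ → Set α)
    (hC : ∀ i, M.IsCircuit' (C i) ∧ u i ∈ C i ∧ C i ⊆ insert (u i) I)
    (h1 : ∀ i, v i ∈ C i)
    (h2 : ∀ i j : Fin ℓ, i < j → v i ∉ C j) :
    M.Indep ((I ∪ Set.range u) \ Set.range v) ∧
      M.closure I = M.closure ((I ∪ Set.range u) \ Set.range v) :=
  iri_tomizawa_sequence_general M I hI ℓ u v C hC h1 h2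
end

section
/- Let M be a matroid, I an independent set, u ∈ cl(I) \ I, and v ∈ C(u, I). Define J := I + u - v. Then for every element x ∈ (cl(I) \ I) - u: if v ∈ C(x, I) then u ∈ C(x, J), and if v ∉ C(x, I) then u ∉ C(x, J). -/
/-- The fundamental-circuit property: `C` is the circuit of `M` contained in `I + u`
and containing `u`. -/
def IsFundCircuit {α : Type*} (M : Matroid α) (I : Set α) (u : α) (C : Set α) : Prop :=
  M.IsCircuit' C ∧ u ∈ C ∧ C ⊆ insert u I

/-- Each element of a circuit is in the closure of the rest of the circuit. -/
lemma Matroid.IsCircuit'.mem_closure_diff {α : Type*} {M : Matroid α} {C : Set α}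
    (hC : M.IsCircuit' C) {y : α} (hy : y ∈ C) : y ∈ M.closure (C \ {y}) := by
  have hind : M.Indep (C \ {y}) := hC.2 (Set.sdiff_singleton_ssubset.mpr hy)
  rw [hind.mem_closure_iff]
  left
  rw [Set.insert_diff_singleton, Set.insert_eq_of_mem hy]
  exact hC.1

/-- Membership characterisation for a fundamental circuit over an independent set. -/
lemma mem_fundCircuit_iff {α : Type*} {M : Matroid α} {K : Set α} (hK : M.Indep K)
    {x : α} (hx : x ∉ K) {C : Set α} (hC : IsFundCircuit M K x C) {y : α} (hyx : y ≠ x) :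
    y ∈ C ↔ y ∈ K ∧ x ∉ M.closure (K \ {y}) := by
  obtain ⟨hcirc, hxC, hsub⟩ := hC
  constructor
  · intro hyC
    have hyK : y ∈ K := by
      rcases hsub hyC with h | h
      · exact absurd h hyx
      · exact h
    refine ⟨hyK, fun hxcl => ?_⟩
    have h1 : y ∈ M.closure (C \ {y}) := hcirc.mem_closure_diff hyC
    have h2 : C \ {y} ⊆ insert x (K \ {y}) := by
      intro z hz
      rcases hsub hz.1 with h | h
      · exact Or.inl h
      · exact Or.inr ⟨h, hz.2⟩
    have h3 : y ∈ M.closure (insert x (K \ {y})) :=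
      M.closure_subset_closure h2 h1
    rw [Matroid.closure_insert_eq_of_mem_closure hxcl] at h3
    have h4 : y ∈ M.closure (K \ {y}) := h3
    exact (Matroid.indep_iff_forall_notMem_closure_diff hK.subset_ground).mp hK hyK h4
  · rintro ⟨hyK, hxcl⟩
    by_contra hyC
    apply hxcl
    have h1 : x ∈ M.closure (C \ {x}) := hcirc.mem_closure_diff hxC
    refine M.closure_subset_closure (fun z hz => ?_) h1
    rcases hsub hz.1 with h | h
    · exact absurd h hz.2
    · exact ⟨h, fun hzy => hyC (hzy ▸ hz.1)⟩

/-- Uniqueness of the fundamental circuit. -/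
lemma fundCircuit_unique {α : Type*} {M : Matroid α} {K : Set α} (hK : M.Indep K)
    {x : α} (hx : x ∉ K) {C₁ C₂ : Set α} (h₁ : IsFundCircuit M K x C₁)
    (h₂ : IsFundCircuit M K x C₂) : C₁ = C₂ := by
  ext y
  by_cases hyx : y = x
  · subst hyx; simp [h₁.2.1, h₂.2.1]
  · rw [mem_fundCircuit_iff hK hx h₁ hyx, mem_fundCircuit_iff hK hx h₂ hyx]

/-- Lemma (Iri–Tomizawa, parts (i) and (ii)): with `J = I + u - v` where
`v ∈ C(u, I)`, for every `x ∈ (cl(I) \ I) - u`: if `v ∈ C(x, I)` then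
`u ∈ C(x, J)`, and if `v ∉ C(x, I)` then `u ∉ C(x, J)`. -/
theorem iri_tomizawa_i_ii {α : Type*} (M : Matroid α) (I : Set α) (hI : M.Indep I)
    (u : α) (hu : u ∈ M.closure I \ I) (Cu : Set α) (hCu : IsFundCircuit M I u Cu)
    (v : α) (hv : v ∈ Cu) (x : α) (hx : x ∈ M.closure I \ I) (hxu : x ≠ u)
    (Cx : Set α) (hCx : IsFundCircuit M I x Cx)
    (CxJ : Set α) (hCxJ : IsFundCircuit M (insert u I \ {v}) x CxJ) :
    (v ∈ Cx → u ∈ CxJ) ∧ (v ∉ Cx → u ∉ CxJ) := by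
  obtain ⟨huclI, huI⟩ := hu
  obtain ⟨hxclI, hxI⟩ := hx
  set J : Set α := insert u I \ {v} with hJdef
  -- J is independent
  have hJ : M.Indep J := by
    by_cases hvu : v = u
    · refine hI.subset ?_
      rintro z ⟨hz, hz2⟩
      rcases hz with h | h
      · exact absurd (h.trans hvu.symm) hz2
      · exact h
    · -- v ∈ I and u ∉ cl (I \ {v})
      have hvI : v ∈ I ∧ u ∉ M.closure (I \ {v}) :=
        (mem_fundCircuit_iff hI huI hCu hvu).mp hv
      have hJeq : J = insert u (I \ {v}) := by
        rw [hJdef]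
        ext z
        simp only [Set.mem_diff, Set.mem_insert_iff, Set.mem_singleton_iff]
        constructor
        · rintro ⟨h | h, h2⟩
          · exact Or.inl h
          · exact Or.inr ⟨h, h2⟩
        · rintro (h | ⟨h, h2⟩)
          · exact ⟨Or.inl h, h ▸ Ne.symm hvu⟩
          · exact ⟨Or.inr h, h2⟩
      rw [hJeq, (hI.subset Set.diff_subset).insert_indep_iff]
      left
      exact ⟨M.closure_subset_ground I huclI, hvI.2⟩
  have hxJ : x ∉ J := by
    rintro ⟨h | h, -⟩
    · exact hxu h
    · exact hxI h
  have hvx : v ≠ x := by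
    rintro rfl
    rcases hCu.2.2 hv with h | h
    · exact hxu h
    · exact hxI h
  refine ⟨fun hvCx => ?_, fun hvCx => ?_⟩
  · -- v ∈ Cx → u ∈ CxJ
    by_contra huCxJ
    -- then CxJ ⊆ insert x I, so CxJ = Cx, but v ∈ Cx ⊆ insert x J, contradiction
    have hsub : CxJ ⊆ insert x I := by
      intro z hz
      rcases hCxJ.2.2 hz with h | ⟨h | h, h2⟩
      · exact Or.inl h
      · exact absurd (h ▸ hz) huCxJ
      · exact Or.inr h
    have heq : CxJ = Cx :=
      fundCircuit_unique hI hxI ⟨hCxJ.1, hCxJ.2.1, hsub⟩ hCx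
    have hvCxJ : v ∈ CxJ := heq ▸ hvCx
    rcases hCxJ.2.2 hvCxJ with h | ⟨-, h2⟩
    · exact hvx h
    · exact h2 rfl
  · -- v ∉ Cx → u ∉ CxJ
    have hsub : Cx ⊆ insert x J := by
      intro z hz
      rcases hCx.2.2 hz with h | h
      · exact Or.inl h
      · exact Or.inr ⟨Or.inr h, fun hzv => hvCx (hzv ▸ hz)⟩
    have heq : CxJ = Cx :=
      fundCircuit_unique hJ hxJ hCxJ ⟨hCx.1, hCx.2.1, hsub⟩
    rw [heq]
    intro huCx
    rcases hCx.2.2 huCx with h | h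
    · exact hxu h.symm
    · exact huI h
end

section
/- Let M1 and M2 be matroids on a common ground set U, let I be a common independent set, and let C be a simple directed cycle in the exchange graph G(I) for which no arc of G(I) is a shortcut arc. Then I ⊖ C (the set obtained from I by adding the non-I elements on C and removing the I elements on C) is a common independent set of M1 and M2. -/
/-- The fundamental circuit of an element `u ∈ cl(I) \ I` with respect to an
independent set `I`: the set of `v ∈ I + u` such that `I + u - v` is independent. -/
def fundC {α : Type*} (M : Matroid α) (I : Set α) (u : α) : Set α :=
  {v ∈ insert u I | M.Indep (insert u I \ {v})}

/-- The exchange graph of a common independent set `I` of `M₁, M₂`: an arc `v → u`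
for `v ∈ I`, `u ∉ I` with `u ∈ cl₁(I)` and `v` in the `M₁`-fundamental circuit of
`u`, and an arc `u → v` for `u ∉ I`, `v ∈ I` with `u ∈ cl₂(I)` and `v` in the
`M₂`-fundamental circuit of `u`. -/
def exchArc {α : Type*} (M₁ M₂ : Matroid α) (I : Set α) (x y : α) : Prop :=
  (x ∈ I ∧ y ∈ M₁.E \ I ∧ y ∈ M₁.closure I ∧ x ∈ fundC M₁ I y) ∨
  (x ∈ M₁.E \ I ∧ y ∈ I ∧ x ∈ M₂.closure I ∧ y ∈ fundC M₂ I x)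

/-! A chord `c p → c q` of a simple cycle with `q ≠ p + 1` closes the shorter cycle
`q → q + 1 → ⋯ → p → q`, which is a shortcut. So when there are no shortcuts, the only arcs of
the exchange graph between vertices of `C` are the arcs of `C` itself.

For `M₁`, pair each `v ∈ I ∩ C` with its successor `y` on `C`: then `I - v + y` is independent,
while `y` lies in the closure of `I - v'` for every other `v' ∈ I ∩ C` (otherwise `v' → y` would
be an arc). Exchanging the pairs one at a time, the set built so far spans nothing outside
`cl(I - v)`, so adding the next `y` keeps it independent. For `M₂`, pair each `y ∈ C \ I` with
its successor instead. -/

open Set Function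

section Dicycle

variable {V : Type*} {A : V → V → Prop} {n : ℕ} {c : ZMod n → V}

theorem IsDicycle.rel_of_mem_cycleArcs (hcyc : IsDicycle A c) {u v : V}
    (h : (u, v) ∈ cycleArcs c) : A u v := by
  obtain ⟨i, hi⟩ := h
  simp only [Prod.mk.injEq] at hi
  exact hi.1 ▸ hi.2 ▸ hcyc.2 i

theorem ZMod.val_add_one_of_ne {d : ℕ} {t : ZMod (d + 1)} (ht : t ≠ d) :
    (t + 1).val = t.val + 1 := by
  have hlt : t.val < d := by
    refine lt_of_le_of_ne (Nat.lt_succ_iff.mp t.val_lt) fun h => ht ?_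
    rw [← ZMod.natCast_zmod_val t, h]
  rw [← ZMod.natCast_zmod_val t, ← Nat.cast_add_one, ZMod.val_cast_of_lt (by omega),
    ZMod.val_cast_of_lt (by omega)]

theorem IsDicycle.isShortcutArc (hcyc : IsDicycle A c) (hinj : Injective c) {p q : ZMod n}
    (harc : A (c p) (c q)) (hq : q ≠ p + 1) : IsShortcutArc A c (c p) (c q) := by
  have : NeZero n := ⟨hcyc.1.ne'⟩
  have hnot : (c p, c q) ∉ cycleArcs c := by
    rintro ⟨i, hi⟩
    simp only [Prod.mk.injEq] at hi
    exact hq (by rw [hinj hi.1, hinj hi.2])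
  -- the cycle `q → q + 1 → ⋯ → p → q` of length `d + 1`
  obtain ⟨d, hd⟩ : ∃ d, d = (p - q).val := ⟨_, rfl⟩
  let f : ZMod (d + 1) → ZMod n := fun t => q + (t.val : ZMod n)
  have hval_lt (t : ZMod (d + 1)) : t.val < n := t.val_lt.trans_le (hd ▸ ZMod.val_lt (p - q))
  have hf_inj : Injective f := fun a b hab => by
    have h := congrArg ZMod.val (add_left_cancel hab)
    rwa [ZMod.val_cast_of_lt (hval_lt a), ZMod.val_cast_of_lt (hval_lt b),
      ZMod.val_injective _ |>.eq_iff] at h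
  have hf_zero : f 0 = q := by simp [f]
  have hf_last : f d = p := by
    rw [show f d = q + d from congrArg _ (congrArg _ (ZMod.val_cast_of_lt d.lt_succ_self)), hd,
      ZMod.natCast_zmod_val, add_sub_cancel]
  have hf_succ (t : ZMod (d + 1)) (ht : t ≠ d) : f (t + 1) = f t + 1 := by
    simp only [f, ZMod.val_add_one_of_ne ht, Nat.cast_add_one, add_assoc]
  have hwrap : (d : ZMod (d + 1)) + 1 = 0 := ZMod.natCast_self' d
  have hstep (t : ZMod (d + 1)) :
      (c (f t), c (f (t + 1))) ∈ cycleArcs c ∪ {(c p, c q)} := by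
    by_cases ht : t = d
    · rw [ht, hwrap, hf_zero, hf_last]
      exact Or.inr rfl
    · exact Or.inl ⟨f t, by rw [hf_succ t ht]⟩
  refine ⟨harc, hnot, d + 1, c ∘ f, ⟨d.succ_pos, fun t => ?_⟩, hinj.comp hf_inj,
    ?_, fun h => hnot (h ▸ ⟨d, ?_⟩)⟩
  · rcases hstep t with h | h
    · exact hcyc.rel_of_mem_cycleArcs h
    · simp only [Set.mem_singleton_iff, Prod.mk.injEq] at h
      rw [comp_apply, comp_apply, h.1, h.2]
      exact harc
  · rintro _ ⟨t, rfl⟩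
    exact hstep t
  · rw [comp_apply, comp_apply, hwrap, hf_zero, hf_last]

theorem IsDicycle.eq_add_one_of_rel (hcyc : IsDicycle A c) (hinj : Injective c)
    (hns : ∀ u v, ¬ IsShortcutArc A c u v) {p q : ZMod n} (harc : A (c p) (c q)) :
    q = p + 1 := by
  by_contra hq
  exact hns _ _ (hcyc.isShortcutArc hinj harc hq)

end Dicycle

namespace Matroid

variable {α : Type*} {M : Matroid α} {I : Set α} {u v : α}

theorem Indep.mem_fundC_iff (hI : M.Indep I) (hv : v ∈ I) (hu : u ∉ I) :
    v ∈ fundC M I u ↔ u ∈ M.E \ M.closure (I \ {v}) := by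
  have huv : u ≠ v := fun h => hu (h ▸ hv)
  rw [fundC, Set.mem_ofPred_eq, ← Set.insert_sdiff_singleton_comm huv,
    (hI.sdiff _).insert_indep_iff_of_notMem (fun h => hu h.1)]
  exact and_iff_right (Set.mem_insert_of_mem _ hv)

theorem Indep.diff_image_union_image {ι : Type*} (hI : M.Indep I) {v y : ι → α} {T : Set ι}
    (hT : T.Finite) (hy : ∀ i ∈ T, y i ∈ M.E \ M.closure (I \ {v i}))
    (hcl : ∀ i ∈ T, ∀ j ∈ T, i ≠ j → y i ∈ M.closure (I \ {v j})) :
    M.Indep (I \ v '' T ∪ y '' T) := by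
  induction T, hT using Set.Finite.induction_on with
  | empty => simpa using hI
  | @insert a T haT _ ih =>
    have hAt : M.Indep (I \ v '' insert a T ∪ y '' T) :=
      (ih (fun i hi => hy i (mem_insert_of_mem a hi))
        (fun i hi j hj => hcl i (mem_insert_of_mem a hi) j (mem_insert_of_mem a hj))).subset
        (union_subset_union_left _ (sdiff_subset_sdiff_right (image_mono (subset_insert a T))))
    have hAt_cl : I \ v '' insert a T ∪ y '' T ⊆ M.closure (I \ {v a}) := by
      refine union_subset ?_ (image_subset_iff.2 fun i hi =>
        hcl i (mem_insert_of_mem a hi) a (mem_insert a T) (ne_of_mem_of_not_mem hi haT))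
      refine (sdiff_subset_sdiff_right ?_).trans
        (M.subset_closure _ (sdiff_subset.trans hI.subset_ground))
      exact singleton_subset_iff.2 (mem_image_of_mem v (mem_insert a T))
    obtain ⟨hyE, hy_cl⟩ := hy a (mem_insert a T)
    rw [image_insert_eq (f := y), union_insert]
    exact hAt.insert_indep_iff.2
      (Or.inl ⟨hyE, fun h => hy_cl (M.closure_subset_closure_of_subset_closure hAt_cl h)⟩)

end Matroid

open scoped symmDiff

section ExchangeGraph

variable {α : Type*} {M₁ M₂ : Matroid α} {I : Set α} {n : ℕ} {c : ZMod n → α}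

theorem IsDicycle.mem_succ_iff_notMem (hcyc : IsDicycle (exchArc M₁ M₂ I) c) (i : ZMod n) :
    c (i + 1) ∈ I ↔ c i ∉ I := by
  rcases hcyc.2 i with h | h
  · exact iff_of_false h.2.1.2 (not_not.2 h.1)
  · exact iff_of_true h.2.1 h.1.2

theorem image_succ_preimage_eq_compl_inter_range {S : Set α}
    (hS : ∀ i, c (i + 1) ∈ S ↔ c i ∉ S) :
    (fun i => c (i + 1)) '' (c ⁻¹' S) = Sᶜ ∩ range c := by
  ext x
  constructor
  · rintro ⟨i, hi, rfl⟩
    exact ⟨fun h => (hS i).1 h hi, mem_range_self _⟩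
  · rintro ⟨hx, j, rfl⟩
    refine ⟨j - 1, ?_, congrArg c (sub_add_cancel j 1)⟩
    by_contra h
    exact hx (by simpa using (hS (j - 1)).2 h)

theorem indep_symmDiff_range_left (hI : M₁.Indep I) (hcyc : IsDicycle (exchArc M₁ M₂ I) c)
    (hcons : ∀ p q, exchArc M₁ M₂ I (c p) (c q) → q = p + 1) :
    M₁.Indep (I ∆ range c) := by
  have : NeZero n := ⟨hcyc.1.ne'⟩
  have hnext (i) (hi : c i ∈ I) : c (i + 1) ∈ M₁.E \ I ∧ c (i + 1) ∈ M₁.closure I ∧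
      c i ∈ fundC M₁ I (c (i + 1)) :=
    ((hcyc.2 i).resolve_right fun h => h.1.2 hi).2
  have hy (i) (hi : c i ∈ I) : c (i + 1) ∈ M₁.E \ M₁.closure (I \ {c i}) :=
    (hI.mem_fundC_iff hi (hnext i hi).1.2).1 (hnext i hi).2.2
  have hind := hI.diff_image_union_image (toFinite (c ⁻¹' I)) hy fun i hi j hj hij => by
    by_contra hcl
    have hfund := (hI.mem_fundC_iff hj (hnext i hi).1.2).2 ⟨(hy i hi).1, hcl⟩
    exact hij (add_right_cancel
      (hcons j (i + 1) (Or.inl ⟨hj, (hnext i hi).1, (hnext i hi).2.1, hfund⟩)))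
  rwa [image_preimage_eq_inter_range, image_succ_preimage_eq_compl_inter_range
    hcyc.mem_succ_iff_notMem, ← sdiff_eq_compl_inter, sdiff_self_inter,
    ← Set.symmDiff_def] at hind

theorem indep_symmDiff_range_right (hI : M₂.Indep I) (hcyc : IsDicycle (exchArc M₁ M₂ I) c)
    (hcons : ∀ p q, exchArc M₁ M₂ I (c p) (c q) → q = p + 1) :
    M₂.Indep (I ∆ range c) := by
  have : NeZero n := ⟨hcyc.1.ne'⟩
  have hnext (i) (hi : c i ∉ I) : c i ∈ M₁.E \ I ∧ c (i + 1) ∈ I ∧ c i ∈ M₂.closure I ∧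
      c (i + 1) ∈ fundC M₂ I (c i) :=
    (hcyc.2 i).resolve_left fun h => hi h.1
  have hy (i) (hi : c i ∉ I) : c i ∈ M₂.E \ M₂.closure (I \ {c (i + 1)}) :=
    (hI.mem_fundC_iff (hnext i hi).2.1 hi).1 (hnext i hi).2.2.2
  have hind := hI.diff_image_union_image (toFinite (c ⁻¹' Iᶜ)) hy fun i hi j hj hij => by
    by_contra hcl
    have hfund := (hI.mem_fundC_iff (hnext j hj).2.1 hi).2 ⟨(hy i hi).1, hcl⟩
    exact hij (add_right_cancel
      (hcons i (j + 1) (Or.inr ⟨(hnext i hi).1, (hnext j hj).2.1, (hnext i hi).2.2.1, hfund⟩))).symm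
  rwa [image_succ_preimage_eq_compl_inter_range fun i => (hcyc.mem_succ_iff_notMem i).not,
    compl_compl, image_preimage_eq_inter_range, ← sdiff_eq_compl_inter, sdiff_self_inter,
    ← Set.symmDiff_def] at hind

end ExchangeGraph

theorem common_indep_of_cycle_no_shortcut_general {α : Type*} (M₁ M₂ : Matroid α)
    (I : Set α) (hI₁ : M₁.Indep I) (hI₂ : M₂.Indep I)
    (n : ℕ) (c : ZMod n → α)
    (hcyc : IsDicycle (exchArc M₁ M₂ I) c) (hsimple : Function.Injective c)
    (hnoshort : ∀ u v : α, ¬ IsShortcutArc (exchArc M₁ M₂ I) c u v) :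
    M₁.Indep ((I ∪ (Set.range c \ I)) \ (I ∩ Set.range c)) ∧
      M₂.Indep ((I ∪ (Set.range c \ I)) \ (I ∩ Set.range c)) := by
  have hcons (p q : ZMod n) (harc : exchArc M₁ M₂ I (c p) (c q)) : q = p + 1 :=
    hcyc.eq_add_one_of_rel hsimple hnoshort harc
  have hS : (I ∪ (range c \ I)) \ (I ∩ range c) = I ∆ range c := by
    ext x
    simp only [Set.symmDiff_def, mem_union, mem_sdiff, mem_inter_iff]
    tauto
  rw [hS]
  exact ⟨indep_symmDiff_range_left hI₁ hcyc hcons, indep_symmDiff_range_right hI₂ hcyc hcons⟩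

/-- If `C` is a simple directed cycle in the exchange graph of a common independent
set `I` admitting no shortcut arc, then `I ⊖ C` is again a common independent set. -/
theorem common_indep_of_cycle_no_shortcut {α : Type*} (M₁ M₂ : Matroid α)
    (hE : M₁.E = M₂.E) (I : Set α) (hI₁ : M₁.Indep I) (hI₂ : M₂.Indep I)
    (n : ℕ) (c : ZMod n → α)
    (hcyc : IsDicycle (exchArc M₁ M₂ I) c) (hsimple : Function.Injective c)
    (hnoshort : ∀ u v : α, ¬ IsShortcutArc (exchArc M₁ M₂ I) c u v) :
    M₁.Indep ((I ∪ (Set.range c \ I)) \ (I ∩ Set.range c)) ∧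
      M₂.Indep ((I ∪ (Set.range c \ I)) \ (I ∩ Set.range c)) :=
  common_indep_of_cycle_no_shortcut_general M₁ M₂ I hI₁ hI₂ n c hcyc hsimple hnoshort
end
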